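/- arXiv:2402.05451 — 2 statements merged into one kernel-verified Lean document; each statement's English description precedes it below -/
import Mathlib

section
/- Let n, k ≤ n, D be positive integers and let M be a mask over ground set [n] with vertices v, u ∈ V(M). Then LDUB(n, M) ≤ LDUB(n, Donate(M, v→u)); that is, donation from v to u cannot decrease the low-degree likelihood ratio upper bound. -/
open Finset Filter Asymptotics Real MeasureTheory
open scoped Classical BigOperators

noncomputable section

namespace PlantedCliqueLD

/-- The vertex set `V(M)` of a mask `M` over ground set `[n]`. -/
def maskVerts {n : ℕ} (M : Finset (Sym2 (Fin n))) : Finset (Fin n) :=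
  Finset.univ.filter fun v => ∃ e ∈ M, v ∈ e

/-- The mask degree `deg^M(v)` of a vertex `v`. -/
def maskDeg {n : ℕ} (M : Finset (Sym2 (Fin n))) (v : Fin n) : ℕ :=
  (M.filter fun e => v ∈ e).card

/-- Expectation of `f` under `Clique(n,k)`, the uniform distribution on
subsets of `[n]` of size `k` (identifying a 0/1 vector with its support). -/
def cliqueExp (n k : ℕ) (f : Finset (Fin n) → ℝ) : ℝ :=
  (∑ S ∈ Finset.powersetCard k (Finset.univ : Finset (Fin n)), f S) /
    ((Finset.powersetCard k (Finset.univ : Finset (Fin n))).card : ℝ)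

/-- Expectation of `f` under `Clique(n,k,S)`: uniform over size-`k` subsets of `S`. -/
def cliqueExpCond (n k : ℕ) (S : Finset (Fin n)) (f : Finset (Fin n) → ℝ) : ℝ :=
  (∑ T ∈ Finset.powersetCard k S, f T) / ((Finset.powersetCard k S).card : ℝ)

/-- Both endpoints of the unordered pair `e` lie in `T`. -/
def edgeIn {n : ℕ} (T : Finset (Fin n)) (e : Sym2 (Fin n)) : Prop :=
  ∀ v ∈ e, v ∈ T

/-- `Φ(M) = ∑_{(i,j) ∈ M} Z_i Z_j` where `Z_i` is the indicator of `i ∈ T`. -/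
def Phi {n : ℕ} (M : Finset (Sym2 (Fin n))) (T : Finset (Fin n)) : ℝ :=
  ∑ e ∈ M, if edgeIn T e then (1 : ℝ) else 0

/-- The low-degree likelihood ratio upper bound `LDUB(n,M)` at degree `D`
and clique size `k`:  `1 + ∑_{d=1}^D (1/d!) E[(∑_{(i,j)∈M} Z_i Z_j)^d]`,
where `Z_i = X_i X'_i` for independent `X, X' ~ Clique(n,k)`. -/
def LDUB (n k D : ℕ) (M : Finset (Sym2 (Fin n))) : ℝ :=
  1 + ∑ d ∈ Finset.Icc 1 D, (1 / (Nat.factorial d : ℝ)) *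
    cliqueExp n k fun S => cliqueExp n k fun S' => Phi M (S ∩ S') ^ d

/-- The conditional low-degree likelihood ratio upper bound `Cond(n,M,S)`,
defined as `LDUB` but with `X, X' ~ Clique(n,k,S)`. -/
def CondLDUB (n k D : ℕ) (M : Finset (Sym2 (Fin n))) (S : Finset (Fin n)) : ℝ :=
  1 + ∑ d ∈ Finset.Icc 1 D, (1 / (Nat.factorial d : ℝ)) *
    cliqueExpCond n k S fun X => cliqueExpCond n k S fun X' => Phi M (X ∩ X') ^ d

/-- The set of vertices that donate an edge in `Donate(M, v → u)`:
those `s ∉ {v,u}` with `(s,v) ∈ M` and `(s,u) ∉ M`. -/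
def donorSet {n : ℕ} (M : Finset (Sym2 (Fin n))) (v u : Fin n) : Finset (Fin n) :=
  Finset.univ.filter fun s => s ≠ v ∧ s ≠ u ∧ s(s, v) ∈ M ∧ s(s, u) ∉ M

/-- `Donate(M, v → u)`: for every `s ∈ V(M) \ {v,u}` with `(s,v) ∈ M` and
`(s,u) ∉ M`, remove `(s,v)` and add `(s,u)`. -/
def donate {n : ℕ} (M : Finset (Sym2 (Fin n))) (v u : Fin n) : Finset (Sym2 (Fin n)) :=
  (M \ (donorSet M v u).image fun s => s(s, v)) ∪ (donorSet M v u).image fun s => s(s, u)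

/-- The `±1` value encoded by a Boolean. -/
def signVal (b : Bool) : ℝ := if b then 1 else -1

/-- Expectation of `h` under the (masked) Erdős–Rényi null distribution:
all coordinates independent uniform `±1`.  (Since `h` is only ever applied
through coordinates of the mask, this realizes the marginal `G(n,M)`.) -/
def nullExp (n : ℕ) (h : (Sym2 (Fin n) → ℝ) → ℝ) : ℝ :=
  (∑ A : Sym2 (Fin n) → Bool, h fun e => signVal (A e)) /
    (Fintype.card (Sym2 (Fin n) → Bool) : ℝ)

/-- The planted sample: edges inside the clique `S` are `+1`; all other
coordinates take the independent uniform `±1` values given by `A`. -/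
def plantedSample {n : ℕ} (S : Finset (Fin n)) (A : Sym2 (Fin n) → Bool) :
    Sym2 (Fin n) → ℝ := fun e => if edgeIn S e then 1 else signVal (A e)

/-- Joint expectation of `h(K, Y)` where `K ~ Clique(n,k)` is the planted
clique and `Y` is the planted-clique sample (this realizes `G(n,k,M)` for
functions reading only mask coordinates, jointly with the clique). -/
def plantedJointExp (n k : ℕ) (h : Finset (Fin n) → (Sym2 (Fin n) → ℝ) → ℝ) : ℝ :=
  cliqueExp n k fun S =>
    (∑ A : Sym2 (Fin n) → Bool, h S (plantedSample S A)) /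
      (Fintype.card (Sym2 (Fin n) → Bool) : ℝ)

/-- Expectation of `h(Y)` under the planted clique distribution. -/
def plantedExp (n k : ℕ) (h : (Sym2 (Fin n) → ℝ) → ℝ) : ℝ :=
  plantedJointExp n k fun _ Y => h Y

/-- Variance under the null distribution. -/
def nullVar (n : ℕ) (h : (Sym2 (Fin n) → ℝ) → ℝ) : ℝ :=
  nullExp n fun Y => (h Y - nullExp n h) ^ 2

/-- Variance under the planted distribution. -/
def plantedVar (n k : ℕ) (h : (Sym2 (Fin n) → ℝ) → ℝ) : ℝ :=
  plantedExp n k fun Y => (h Y - plantedExp n k h) ^ 2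

/-- Evaluate a polynomial whose variables are the entries of the mask `M`
on a (full) sample `Y`, reading only the coordinates in `M`. -/
def evalMasked {n : ℕ} (M : Finset (Sym2 (Fin n)))
    (f : MvPolynomial {e : Sym2 (Fin n) // e ∈ M} ℝ) (Y : Sym2 (Fin n) → ℝ) : ℝ :=
  MvPolynomial.eval (fun e => Y e.1) f


/-!
Let `τ` swap `v` and `u` on vertex sets, let `N` be `M` without the donated pairs `(s,v)`, and let
`x(T)` count the donors in `T`; donors avoid `v` and `u`, so `x(τT) = x(T)`. For
`M' = Donate(M, v→u)` we get `Φ_M(T) = Φ_N(T) + [v ∈ T] x(T)` and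
`Φ_{M'}(T) = Φ_N(T) + [u ∈ T] x(T)`.
When `v ∈ T` and `u ∉ T`, the swap embeds the pairs of `N` inside `T` into those inside `τT` (each
pair `(s,v)` of `N` has its partner `(s,u)` in `N`), so `a = Φ_N(T) ≤ Φ_N(τT) = b`, and convexity
of `t ↦ t^d` gives `(a + x)^d + b^d ≤ a^d + (b + x)^d`, that is
`Φ_M(T)^d + Φ_M(τT)^d ≤ Φ_{M'}(T)^d + Φ_{M'}(τT)^d`; the other cases are symmetric or trivial.
Since `Clique(n,k)` is `τ`-invariant, averaging over `T = X ∩ X'` gives `E[Φ_M^d] ≤ E[Φ_{M'}^d]`.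
-/

theorem pow_add_add_pow_le_pow_add_add_pow {R : Type*} [CommRing R] [LinearOrder R]
    [IsStrictOrderedRing R] {a b x : R} (ha : 0 ≤ a) (hab : a ≤ b) (hx : 0 ≤ x) (d : ℕ) :
    (a + x) ^ d + b ^ d ≤ a ^ d + (b + x) ^ d := by
  have hb : 0 ≤ b := ha.trans hab
  have : (a + x) ^ d - a ^ d ≤ (b + x) ^ d - b ^ d := by
    rw [← geom_sum₂_mul, ← geom_sum₂_mul, add_sub_cancel_left, add_sub_cancel_left]
    gcongr
  linarith

section Swap

variable {α β : Type*} [Fintype α] [AddCommMonoid β]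

theorem sum_powersetCard_map_perm (σ : Equiv.Perm α) (k : ℕ) (F : Finset α → β) :
    ∑ S ∈ powersetCard k univ, F (S.map σ.toEmbedding) = ∑ S ∈ powersetCard k univ, F S := by
  conv_rhs => rw [← map_univ_equiv σ, powersetCard_map, sum_map]
  rfl

theorem sum_sum_inter_map_perm [DecidableEq α] (σ : Equiv.Perm α) (k : ℕ) (F : Finset α → β) :
    ∑ S ∈ powersetCard k univ, ∑ S' ∈ powersetCard k univ, F ((S ∩ S').map σ.toEmbedding) =
      ∑ S ∈ powersetCard k univ, ∑ S' ∈ powersetCard k univ, F (S ∩ S') := by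
  calc _ = ∑ S ∈ powersetCard k univ, ∑ S' ∈ powersetCard k univ,
        F (S.map σ.toEmbedding ∩ S') := by
        refine sum_congr rfl fun S _ => ?_
        simp_rw [map_inter]
        exact sum_powersetCard_map_perm σ k fun S' => F (S.map σ.toEmbedding ∩ S')
    _ = _ := sum_powersetCard_map_perm σ k fun S => ∑ S' ∈ powersetCard k univ, F (S ∩ S')

end Swap

variable {n : ℕ}

theorem edgeIn_mk {T : Finset (Fin n)} {a b : Fin n} : edgeIn T s(a, b) ↔ a ∈ T ∧ b ∈ T := by
  simp [edgeIn]

theorem Phi_eq_card (N : Finset (Sym2 (Fin n))) (T : Finset (Fin n)) :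
    Phi N T = #(N.filter (edgeIn T)) := by
  rw [Phi, sum_boole]

theorem Phi_nonneg (N : Finset (Sym2 (Fin n))) (T : Finset (Fin n)) : 0 ≤ Phi N T := by
  rw [Phi_eq_card]
  positivity

theorem Phi_union {A B : Finset (Sym2 (Fin n))} (h : Disjoint A B) (T : Finset (Fin n)) :
    Phi (A ∪ B) T = Phi A T + Phi B T :=
  sum_union h

theorem Phi_image_mk (S : Finset (Fin n)) (w : Fin n) (T : Finset (Fin n)) :
    Phi (S.image fun s => s(s, w)) T = if w ∈ T then (#(S ∩ T) : ℝ) else 0 := by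
  rw [Phi, sum_image fun s _ t _ h => Sym2.congr_left.mp h]
  split_ifs with hw <;> simp [edgeIn_mk, hw]

theorem Phi_le_Phi_map_swap {N : Finset (Sym2 (Fin n))} {v u : Fin n} {T : Finset (Fin n)}
    (hN : ∀ e ∈ N, ¬ e.IsDiag) (hNvu : ∀ s, s ≠ u → s(s, v) ∈ N → s(s, u) ∈ N) (hu : u ∉ T) :
    Phi N T ≤ Phi N (T.map (Equiv.swap v u).toEmbedding) := by
  rw [Phi_eq_card, Phi_eq_card, Nat.cast_le]
  refine card_le_card_of_injOn (Sym2.map (Equiv.swap v u)) ?_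
    (Sym2.map.injective (Equiv.swap v u).injective).injOn
  rintro e he
  induction e using Sym2.ind with
  | _ a b =>
    simp only [coe_filter, Set.mem_ofPred_eq, edgeIn_mk] at he
    obtain ⟨hab, ha, hb⟩ := he
    have hau : a ≠ u := ne_of_mem_of_not_mem ha hu
    have hbu : b ≠ u := ne_of_mem_of_not_mem hb hu
    have hab' : a ≠ b := fun h => hN _ hab (Sym2.mk_isDiag_iff.mpr h)
    simp only [coe_filter, Set.mem_ofPred_eq, Sym2.map_mk, edgeIn_mk, mem_map_equiv,
      Equiv.symm_swap, Equiv.swap_apply_self, ha, hb, and_true]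
    by_cases hav : a = v
    · subst hav
      rw [Equiv.swap_apply_left, Equiv.swap_apply_of_ne_of_ne hab'.symm hbu, Sym2.eq_swap]
      exact hNvu b hbu (Sym2.eq_swap ▸ hab)
    by_cases hbv : b = v
    · subst hbv
      rw [Equiv.swap_apply_left, Equiv.swap_apply_of_ne_of_ne hav hau]
      exact hNvu a hau hab
    rwa [Equiv.swap_apply_of_ne_of_ne hav hau, Equiv.swap_apply_of_ne_of_ne hbv hbu]

section Donate

variable {M : Finset (Sym2 (Fin n))} {v u : Fin n}

theorem mem_donorSet {s : Fin n} :
    s ∈ donorSet M v u ↔ s ≠ v ∧ s ≠ u ∧ s(s, v) ∈ M ∧ s(s, u) ∉ M := by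
  simp [donorSet]

theorem donate_self (M : Finset (Sym2 (Fin n))) (v : Fin n) : donate M v v = M := by
  simp [donate, donorSet]

theorem Phi_eq_Phi_sdiff_add (T : Finset (Fin n)) :
    Phi M T = Phi (M \ (donorSet M v u).image fun s => s(s, v)) T +
      if v ∈ T then (#(donorSet M v u ∩ T) : ℝ) else 0 := by
  have hsub : ((donorSet M v u).image fun s => s(s, v)) ⊆ M := by
    rintro _ he
    obtain ⟨s, hs, rfl⟩ := mem_image.mp he
    exact (mem_donorSet.mp hs).2.2.1
  rw [← Phi_image_mk, ← Phi_union sdiff_disjoint, sdiff_union_of_subset hsub]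

theorem Phi_donate_eq_Phi_sdiff_add (T : Finset (Fin n)) :
    Phi (donate M v u) T = Phi (M \ (donorSet M v u).image fun s => s(s, v)) T +
      if u ∈ T then (#(donorSet M v u ∩ T) : ℝ) else 0 := by
  have hdisj : Disjoint (M \ (donorSet M v u).image fun s => s(s, v))
      ((donorSet M v u).image fun s => s(s, u)) := by
    refine disjoint_left.mpr fun e he he' => ?_
    obtain ⟨s, hs, rfl⟩ := mem_image.mp he'
    exact (mem_donorSet.mp hs).2.2.2 (mem_sdiff.mp he).1
  rw [← Phi_image_mk, donate, Phi_union hdisj]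

theorem donorSet_inter_map_swap (T : Finset (Fin n)) :
    donorSet M v u ∩ T.map (Equiv.swap v u).toEmbedding = donorSet M v u ∩ T := by
  ext s
  simp only [mem_inter, mem_map_equiv, Equiv.symm_swap]
  constructor <;> rintro ⟨hs, hT⟩ <;>
    simpa [hs, Equiv.swap_apply_of_ne_of_ne (mem_donorSet.mp hs).1 (mem_donorSet.mp hs).2.1]
      using hT

theorem Phi_donate_eq_of_mem_iff {T : Finset (Fin n)} (h : v ∈ T ↔ u ∈ T) :
    Phi (donate M v u) T = Phi M T := by
  rw [Phi_donate_eq_Phi_sdiff_add, Phi_eq_Phi_sdiff_add (M := M) (v := v) (u := u) T]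
  simp only [h]

theorem sdiff_donated_closed (hM : ∀ e ∈ M, ¬ e.IsDiag) (hvu : v ≠ u) (s : Fin n) (hsu : s ≠ u)
    (hs : s(s, v) ∈ M \ (donorSet M v u).image fun s => s(s, v)) :
    s(s, u) ∈ M \ (donorSet M v u).image fun s => s(s, v) := by
  obtain ⟨hsM, hsD⟩ := mem_sdiff.mp hs
  have hsv : s ≠ v := fun h => hM _ hsM (Sym2.mk_isDiag_iff.mpr h)
  have hsuM : s(s, u) ∈ M := by
    by_contra h
    exact hsD (mem_image_of_mem _ (mem_donorSet.mpr ⟨hsv, hsu, hsM, h⟩))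
  refine mem_sdiff.mpr ⟨hsuM, fun he => ?_⟩
  obtain ⟨t, ht, hts⟩ := mem_image.mp he
  rcases Sym2.eq_iff.mp hts with ⟨-, h⟩ | ⟨h, -⟩
  · exact hvu h
  · exact (mem_donorSet.mp ht).2.1 h

theorem Phi_pow_add_Phi_map_swap_pow_le_of_mem (hM : ∀ e ∈ M, ¬ e.IsDiag) (hvu : v ≠ u)
    (d : ℕ) {T : Finset (Fin n)} (hv : v ∈ T) (hu : u ∉ T) :
    Phi M T ^ d + Phi M (T.map (Equiv.swap v u).toEmbedding) ^ d ≤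
      Phi (donate M v u) T ^ d + Phi (donate M v u) (T.map (Equiv.swap v u).toEmbedding) ^ d := by
  have hv' : v ∉ T.map (Equiv.swap v u).toEmbedding := by simpa [mem_map_equiv] using hu
  have hu' : u ∈ T.map (Equiv.swap v u).toEmbedding := by simpa [mem_map_equiv] using hv
  rw [Phi_donate_eq_Phi_sdiff_add, Phi_donate_eq_Phi_sdiff_add,
    Phi_eq_Phi_sdiff_add (M := M) (v := v) (u := u) T,
    Phi_eq_Phi_sdiff_add (M := M) (v := v) (u := u) (T.map _), donorSet_inter_map_swap]
  simp only [hv, hu, hv', hu', if_true, if_false, add_zero]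
  exact pow_add_add_pow_le_pow_add_add_pow (Phi_nonneg _ _)
    (Phi_le_Phi_map_swap (fun e he => hM e (mem_sdiff.mp he).1)
      (sdiff_donated_closed hM hvu) hu) (Nat.cast_nonneg _) d

theorem Phi_pow_add_Phi_map_swap_pow_le (hM : ∀ e ∈ M, ¬ e.IsDiag) (hvu : v ≠ u) (d : ℕ)
    (T : Finset (Fin n)) :
    Phi M T ^ d + Phi M (T.map (Equiv.swap v u).toEmbedding) ^ d ≤
      Phi (donate M v u) T ^ d + Phi (donate M v u) (T.map (Equiv.swap v u).toEmbedding) ^ d := by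
  by_cases h : v ∈ T ↔ u ∈ T
  · have h' : v ∈ T.map (Equiv.swap v u).toEmbedding ↔ u ∈ T.map (Equiv.swap v u).toEmbedding := by
      simpa [mem_map_equiv] using h.symm
    rw [Phi_donate_eq_of_mem_iff h, Phi_donate_eq_of_mem_iff h']
  by_cases hv : v ∈ T
  · exact Phi_pow_add_Phi_map_swap_pow_le_of_mem hM hvu d hv (by tauto)
  have hT : (T.map (Equiv.swap v u).toEmbedding).map (Equiv.swap v u).toEmbedding = T := by
    ext
    simp [mem_map_equiv]
  have h := Phi_pow_add_Phi_map_swap_pow_le_of_mem hM hvu d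
    (T := T.map (Equiv.swap v u).toEmbedding) (by simp [mem_map_equiv]; tauto)
    (by simpa [mem_map_equiv] using hv)
  rw [hT] at h
  linarith

theorem sum_sum_Phi_pow_le_donate (hM : ∀ e ∈ M, ¬ e.IsDiag) (hvu : v ≠ u) (k d : ℕ) :
    ∑ S ∈ powersetCard k univ, ∑ S' ∈ powersetCard k univ, Phi M (S ∩ S') ^ d ≤
      ∑ S ∈ powersetCard k univ, ∑ S' ∈ powersetCard k univ, Phi (donate M v u) (S ∩ S') ^ d := by
  have h := sum_le_sum (s := powersetCard k univ) fun S _ => sum_le_sum (s := powersetCard k univ)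
    fun S' _ => Phi_pow_add_Phi_map_swap_pow_le hM hvu d (S ∩ S')
  have hM' := sum_sum_inter_map_perm (Equiv.swap v u) k fun T => Phi M T ^ d
  have hD' := sum_sum_inter_map_perm (Equiv.swap v u) k fun T => Phi (donate M v u) T ^ d
  beta_reduce at hM' hD'
  simp only [sum_add_distrib] at h
  linarith

end Donate

theorem cliqueExp_cliqueExp_le {k : ℕ} {F G : Finset (Fin n) → Finset (Fin n) → ℝ}
    (h : ∑ S ∈ powersetCard k univ, ∑ S' ∈ powersetCard k univ, F S S' ≤
      ∑ S ∈ powersetCard k univ, ∑ S' ∈ powersetCard k univ, G S S') :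
    cliqueExp n k (fun S => cliqueExp n k (F S)) ≤
      cliqueExp n k (fun S => cliqueExp n k (G S)) := by
  unfold cliqueExp
  rw [← sum_div, ← sum_div]
  gcongr

theorem donation_mono_general {n : ℕ} (k D : ℕ) (M : Finset (Sym2 (Fin n))) (hMnd : ∀ e ∈ M, ¬ e.IsDiag)
    (v u : Fin n) :
    LDUB n k D M ≤ LDUB n k D (donate M v u) := by
  rcases eq_or_ne v u with rfl | hvu
  · rw [donate_self]
  · unfold LDUB
    gcongr with d
    exact cliqueExp_cliqueExp_le (sum_sum_Phi_pow_le_donate hMnd hvu k d)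

/-- Donation cannot decrease the low-degree likelihood
ratio upper bound: `LDUB(n, M) ≤ LDUB(n, Donate(M, v→u))`. -/
theorem donation_mono {n : ℕ} (k D : ℕ) (hn : 0 < n) (hk : 0 < k) (hkn : k ≤ n)
    (hD : 0 < D) (M : Finset (Sym2 (Fin n))) (hMnd : ∀ e ∈ M, ¬ e.IsDiag)
    (v u : Fin n) (hv : v ∈ maskVerts M) (hu : u ∈ maskVerts M) :
    LDUB n k D M ≤ LDUB n k D (donate M v u) :=
  donation_mono_general k D M hMnd v u

end PlantedCliqueLD
end
end

section
/- For any integer ℓ ≥ 0, consider the degree-(2ℓ+1) polynomial τ = τ_ℓ : ℝ → ℝ defined by τ(y) = (2ℓ+1)·C(2ℓ,ℓ)·∫₀^y t^ℓ (1−t)^ℓ dt, where C(2ℓ,ℓ) is the central binomial coefficient. Then for any b ∈ {0,1} and any 0 ≤ Δ ≤ 1/2, every y ∈ ℝ with |y − b| ≤ Δ satisfies |τ(y) − b| ≤ (ℓ + 1/2)·(6Δ)^ℓ. -/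
open Finset Filter Asymptotics Real MeasureTheory
open scoped Classical BigOperators

noncomputable section

namespace PlantedCliqueLD

/-- The threshold-approximating polynomial
`τ_ℓ(y) = (2ℓ+1) C(2ℓ,ℓ) ∫₀^y t^ℓ (1-t)^ℓ dt`. -/
def tau (ℓ : ℕ) (y : ℝ) : ℝ :=
  ((2 * ℓ + 1 : ℕ) : ℝ) * ((2 * ℓ).choose ℓ : ℝ) * ∫ t in (0 : ℝ)..y, t ^ ℓ * (1 - t) ^ ℓ


open scoped Nat

lemma fact_prod_shift (n k : ℕ) :
    n ! * ∏ j ∈ Finset.range k, (n + 1 + j) = (n + k)! := by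
  induction k with
  | zero => simp
  | succ k ih =>
      rw [Finset.prod_range_succ, ← mul_assoc, ih]
      rw [show n + (k + 1) = (n + k) + 1 by ring, Nat.factorial_succ]
      ring

lemma beta_val (ℓ : ℕ) :
    (∫ t in (0:ℝ)..1, t ^ ℓ * (1 - t) ^ ℓ) = (ℓ ! * ℓ ! : ℝ) / (2 * ℓ + 1)! := by
  have hu : (0:ℝ) < Complex.re ((ℓ : ℂ) + 1) := by
    simp
    positivity
  have h := Complex.betaIntegral_eval_nat_add_one_right hu ℓ
  rw [Complex.betaIntegral] at h
  simp only [add_sub_cancel_right, Complex.cpow_natCast] at h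
  have hL : (∫ x : ℝ in (0:ℝ)..1, ((x:ℂ)) ^ ℓ * (1 - (x:ℂ)) ^ ℓ)
      = ((∫ t in (0:ℝ)..1, t ^ ℓ * (1 - t) ^ ℓ : ℝ) : ℂ) := by
    rw [← intervalIntegral.integral_ofReal]
    congr 1
    ext x
    push_cast
    ring
  have hp : (∏ j ∈ Finset.range (ℓ + 1), ((ℓ : ℂ) + 1 + (j : ℂ)))
      = ((2 * ℓ + 1)! : ℂ) / (ℓ ! : ℂ) := by
    have := fact_prod_shift ℓ (ℓ + 1)
    have h2 : ((ℓ ! : ℂ)) * ∏ j ∈ Finset.range (ℓ + 1), ((ℓ : ℂ) + 1 + (j : ℂ))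
        = ((2 * ℓ + 1)! : ℂ) := by
      rw [show 2 * ℓ + 1 = ℓ + (ℓ + 1) by ring, ← this]
      push_cast
      ring
    rw [eq_div_iff (by exact_mod_cast Nat.factorial_ne_zero ℓ : (ℓ ! : ℂ) ≠ 0)]
    linear_combination h2
  rw [hL, hp] at h
  apply Complex.ofReal_inj.mp
  rw [h, div_div_eq_mul_div]
  push_cast
  ring


lemma tau_one (ℓ : ℕ) : tau ℓ 1 = 1 := by
  rw [tau, beta_val]
  have hc : (2 * ℓ).choose ℓ * (ℓ ! * ℓ !) = (2 * ℓ)! := by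
    have := Nat.choose_mul_factorial_mul_factorial (show ℓ ≤ 2 * ℓ by omega)
    rw [show 2 * ℓ - ℓ = ℓ by omega] at this
    linarith [this]
  have hf : ((2 * ℓ + 1)! : ℝ) = (2 * ℓ + 1) * (2 * ℓ)! := by
    exact_mod_cast congrArg (Nat.cast : ℕ → ℝ) (Nat.factorial_succ (2 * ℓ))
  rw [hf]
  have h1 : ((2 * ℓ)! : ℝ) ≠ 0 := by exact_mod_cast Nat.factorial_ne_zero _
  have h2 : ((2 * ℓ : ℕ) : ℝ) + 1 ≠ 0 := by positivity
  field_simp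
  push_cast [← hc]
  ring

lemma integral_bound (ℓ : ℕ) (Δ a y : ℝ) (hΔ0 : 0 ≤ Δ)
    (h : ∀ x ∈ Set.uIoc a y, |x| ≤ 3 / 2 ∧ |1 - x| ≤ 3 / 2 ∧ (|x| ≤ Δ ∨ |1 - x| ≤ Δ))
    (hya : |y - a| ≤ Δ) :
    |∫ t in a..y, t ^ ℓ * (1 - t) ^ ℓ| ≤ (3 / 2) ^ ℓ * Δ ^ ℓ * Δ := by
  have := intervalIntegral.norm_integral_le_of_norm_le_const
    (C := (3 / 2) ^ ℓ * Δ ^ ℓ) (f := fun t : ℝ => t ^ ℓ * (1 - t) ^ ℓ) (a := a) (b := y) ?_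
  · calc |∫ t in a..y, t ^ ℓ * (1 - t) ^ ℓ| ≤ (3 / 2) ^ ℓ * Δ ^ ℓ * |y - a| := this
      _ ≤ (3 / 2) ^ ℓ * Δ ^ ℓ * Δ := by
          apply mul_le_mul_of_nonneg_left hya
          positivity
  · intro x hx
    obtain ⟨h1, h2, h3⟩ := h x hx
    rw [Real.norm_eq_abs, abs_mul, abs_pow, abs_pow]
    rcases h3 with h3 | h3
    · calc |x| ^ ℓ * |1 - x| ^ ℓ ≤ Δ ^ ℓ * (3 / 2) ^ ℓ := by
            apply mul_le_mul (pow_le_pow_left₀ (abs_nonneg _) h3 ℓ)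
              (pow_le_pow_left₀ (abs_nonneg _) h2 ℓ) (by positivity) (by positivity)
        _ = (3 / 2) ^ ℓ * Δ ^ ℓ := by ring
    · apply mul_le_mul (pow_le_pow_left₀ (abs_nonneg _) h1 ℓ)
        (pow_le_pow_left₀ (abs_nonneg _) h3 ℓ) (by positivity) (by positivity)

lemma final_bound (ℓ : ℕ) (Δ I : ℝ) (hΔ0 : 0 ≤ Δ) (hΔ1 : Δ ≤ 1 / 2)
    (hI : |I| ≤ (3 / 2) ^ ℓ * Δ ^ ℓ * Δ) :
    |((2 * ℓ + 1 : ℕ) : ℝ) * ((2 * ℓ).choose ℓ : ℝ) * I| ≤ ((ℓ : ℝ) + 1 / 2) * (6 * Δ) ^ ℓ := by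
  have hch : (((2 * ℓ).choose ℓ : ℕ) : ℝ) ≤ 4 ^ ℓ := by
    have h1 : (2 * ℓ).choose ℓ ≤ (2 * ℓ + 1).choose ℓ := Nat.choose_le_choose ℓ (by omega)
    have h2 := Nat.choose_middle_le_pow ℓ
    exact_mod_cast h1.trans h2
  have hc0 : (0:ℝ) ≤ ((2 * ℓ + 1 : ℕ) : ℝ) * ((2 * ℓ).choose ℓ : ℝ) := by positivity
  rw [abs_mul, abs_of_nonneg hc0]
  calc ((2 * ℓ + 1 : ℕ) : ℝ) * ((2 * ℓ).choose ℓ : ℝ) * |I|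
      ≤ ((2 * ℓ + 1 : ℕ) : ℝ) * (4 : ℝ) ^ ℓ * ((3 / 2) ^ ℓ * Δ ^ ℓ * Δ) := by
        apply mul_le_mul (by apply mul_le_mul_of_nonneg_left hch (by positivity)) hI
          (abs_nonneg _) (by positivity)
    _ = (((2 * ℓ : ℕ) : ℝ) + 1) * Δ * (6 * Δ) ^ ℓ := by
        have h46 : (4:ℝ) ^ ℓ * (3 / 2) ^ ℓ = 6 ^ ℓ := by
          rw [← mul_pow]; norm_num
        push_cast
        rw [mul_pow, ← h46]
        ring
    _ ≤ ((ℓ : ℝ) + 1 / 2) * (6 * Δ) ^ ℓ := by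
        apply mul_le_mul_of_nonneg_right _ (by positivity)
        push_cast
        nlinarith [Nat.cast_nonneg (α := ℝ) ℓ]


/-- For any `ℓ ≥ 0`, `b ∈ {0,1}` and `0 ≤ Δ ≤ 1/2`, every
`y` with `|y - b| ≤ Δ` satisfies `|τ_ℓ(y) - b| ≤ (ℓ + 1/2)(6Δ)^ℓ`. -/
theorem tau_threshold (ℓ : ℕ) (b : ℝ) (hb : b = 0 ∨ b = 1)
    (Δ : ℝ) (hΔ0 : 0 ≤ Δ) (hΔ1 : Δ ≤ 1 / 2) (y : ℝ) (hy : |y - b| ≤ Δ) :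
    |tau ℓ y - b| ≤ ((ℓ : ℝ) + 1 / 2) * (6 * Δ) ^ ℓ := by
  rcases hb with hb | hb
  · subst hb
    rw [sub_zero] at hy ⊢
    rw [tau]
    apply final_bound ℓ Δ _ hΔ0 hΔ1
    apply integral_bound ℓ Δ 0 y hΔ0 _ (by simpa using hy)
    intro x hx
    have hx' := Set.uIoc_subset_uIcc hx
    rw [Set.uIcc_eq_union] at hx'
    have hxa : |x| ≤ Δ := by
      rcases hx' with h | h
      · rw [Set.mem_Icc] at h
        rw [abs_le]
        constructor <;> [linarith [neg_abs_le y]; linarith [le_abs_self y]]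
      · rw [Set.mem_Icc] at h
        rw [abs_le]
        constructor <;> [linarith [neg_abs_le y]; linarith [le_abs_self y]]
    refine ⟨hxa.trans (by linarith), ?_, Or.inl hxa⟩
    rw [abs_le]
    rw [abs_le] at hxa
    constructor <;> linarith
  · subst hb
    have h1 : tau ℓ y - 1 = ((2 * ℓ + 1 : ℕ) : ℝ) * ((2 * ℓ).choose ℓ : ℝ) *
        ∫ t in (1:ℝ)..y, t ^ ℓ * (1 - t) ^ ℓ := by
      have hi : ∀ a c : ℝ, IntervalIntegrable (fun t : ℝ => t ^ ℓ * (1 - t) ^ ℓ)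
          MeasureTheory.volume a c := fun a c => (by fun_prop : Continuous
          fun t : ℝ => t ^ ℓ * (1 - t) ^ ℓ).intervalIntegrable a c
      have h0 := tau_one ℓ
      rw [tau] at h0
      have hadd := intervalIntegral.integral_add_adjacent_intervals (hi 0 1) (hi 1 y)
      rw [tau, ← hadd]
      linear_combination h0
    rw [h1]
    apply final_bound ℓ Δ _ hΔ0 hΔ1
    apply integral_bound ℓ Δ 1 y hΔ0 _ hy
    intro x hx
    have hx' := Set.uIoc_subset_uIcc hx
    rw [Set.uIcc_eq_union] at hx'
    have hxa : |1 - x| ≤ Δ := by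
      rcases hx' with h | h <;> rw [Set.mem_Icc] at h <;> rw [abs_le] <;>
        constructor <;> [skip; skip; skip; skip] <;>
        [linarith [le_abs_self (y - 1)]; linarith [neg_abs_le (y - 1)];
         linarith [le_abs_self (y - 1)]; linarith [neg_abs_le (y - 1)]]
    refine ⟨?_, hxa.trans (by linarith), Or.inr hxa⟩
    rw [abs_le]
    rw [abs_le] at hxa
    constructor <;> linarith


end PlantedCliqueLD
end
end
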